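/- arXiv:1605.01747 — 3 statements merged into one kernel-verified Lean document; each statement's English description precedes it below -/
import Mathlib

section
/- (Almost permutation extension lemma.) Let K be a finite set and ε > 0. Then there is κ > 0, depending only on |K| and ε, with the following property: for every natural number d, every pair of K-tuples (B_k)_{k∈K}, (C_k)_{k∈K} of subsets of {1,…,d} satisfying |u_d(B_k) - u_d(C_k)| < κ for all k, and max(u_d(B_k ∩ B_l), u_d(C_k ∩ C_l)) < κ for all k ≠ l, and every family of functions p_k : B_k → C_k with u_d(p_k(B_k)) ≥ u_d(C_k) - κ for all k, there is a permutation p ∈ S_d such that u_d(⋃_{k∈K} {j ∈ B_k : p(j) ≠ p_k(j)}) ≤ ε. -/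
/-!
Shrink each `B k` to a set `A k` on which `p k` is injective with the same image; this loses
`|B k| - |p k (B k)| < 2κd` points. Then discard from `A k` the points lying in another `B l`
or sent by `p k` into another `C l`; by injectivity this loses at most `|B k ∩ B l| + |C k ∩ C l|`
points for each `l ≠ k`. On what remains the domains are disjoint and the images are disjoint,
so the `p k` glue to a single injection, which extends to a permutation of `{1,…,d}`. The
disagreement set lies in the discarded points, of proportion at most `2|K|(|K|+1)κ`.
-/

open Finset Function

theorem Set.InjOn.exists_perm_eqOn {α : Type*} [Fintype α] {s : Set α} {f : α → α}
    (hf : s.InjOn f) : ∃ σ : Equiv.Perm α, s.EqOn σ f := by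
  have hmaps : s.MapsTo f (Finset.univ : Finset α) := fun x _ => Finset.mem_univ (f x)
  obtain ⟨g, hg⟩ := hmaps.exists_equiv_extend_of_card_eq card_univ.symm hf
  exact ⟨g.trans (Equiv.subtypeUnivEquiv Finset.mem_univ), hg⟩

theorem exists_perm_eqOn_iUnion {α K : Type*} [Fintype α] {D : K → Set α} {p : K → α → α}
    (hD : Pairwise (Disjoint on D))
    (hp : ∀ k l, ∀ i ∈ D k, ∀ j ∈ D l, p k i = p l j → i = j) :
    ∃ σ : Equiv.Perm α, ∀ k, (D k).EqOn σ (p k) := by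
  classical
  set f : α → α := fun j => if h : ∃ k, j ∈ D k then p h.choose j else j
  have hf : ∀ {k j}, j ∈ D k → f j = p k j := by
    intro k j hj
    have h : ∃ k, j ∈ D k := ⟨k, hj⟩
    simp only [f, dif_pos h, hD.eq (Set.not_disjoint_iff.2 ⟨j, h.choose_spec, hj⟩)]
  obtain ⟨σ, hσ⟩ := Set.InjOn.exists_perm_eqOn (s := ⋃ k, D k) (f := f) <| by
    rintro i hi j hj hij
    obtain ⟨k, hi⟩ := Set.mem_iUnion.1 hi
    obtain ⟨l, hj⟩ := Set.mem_iUnion.1 hj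
    exact hp k l i hi j hj (by rwa [hf hi, hf hj] at hij)
  exact ⟨σ, fun k j hj => (hσ (Set.mem_iUnion.2 ⟨k, hj⟩)).trans (hf hj)⟩

section GoodPart

variable {α K : Type*} [DecidableEq α] [Fintype K] [DecidableEq K]
  (B C : K → Finset α) (p : K → α → α) (A : K → Finset α)

def goodPart (k : K) : Finset α :=
  (A k).filter fun j => ∀ l ≠ k, j ∉ B l ∧ p k j ∉ C l

def gluingDefect (k : K) : ℕ :=
  #(B k) - #((B k).image (p k)) + ∑ l ∈ univ.erase k, (#(B k ∩ B l) + #(C k ∩ C l))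

variable {B C p A}

theorem pairwise_disjoint_goodPart (hA : ∀ k, A k ⊆ B k) :
    Pairwise (Disjoint on fun k => (goodPart B C p A k : Set α)) := by
  refine fun k l hkl => Set.disjoint_left.2 fun j hjk hjl => ?_
  exact ((mem_filter.1 hjk).2 l hkl.symm).1 (hA l (mem_filter.1 hjl).1)

theorem eq_of_mem_goodPart_of_apply_eq (hinj : ∀ k, Set.InjOn (p k) (A k))
    (hmap : ∀ k, ∀ j ∈ A k, p k j ∈ C k) {k l : K} {i j : α}
    (hi : i ∈ goodPart B C p A k) (hj : j ∈ goodPart B C p A l) (hij : p k i = p l j) :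
    i = j := by
  obtain ⟨hiA, hi⟩ := mem_filter.1 hi
  obtain ⟨hjA, hj⟩ := mem_filter.1 hj
  obtain rfl | hkl := eq_or_ne k l
  · exact hinj k hiA hjA hij
  · exact absurd (hij ▸ hmap k i hiA) (hj k hkl).2

theorem card_sdiff_goodPart_le (k : K) (hinj : Set.InjOn (p k) (A k))
    (hmap : ∀ j ∈ A k, p k j ∈ C k) :
    #(B k \ goodPart B C p A k) ≤
      #(B k \ A k) + ∑ l ∈ univ.erase k, (#(B k ∩ B l) + #(C k ∩ C l)) := by
  have hcover : B k \ goodPart B C p A k ⊆ (B k \ A k) ∪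
      (univ.erase k).biUnion fun l => B k ∩ B l ∪ (A k).filter fun j => p k j ∈ C l := by
    intro j hj
    obtain ⟨hjB, hjgood⟩ := mem_sdiff.1 hj
    by_cases hjA : j ∈ A k
    · obtain ⟨l, hlk, hl⟩ : ∃ l ≠ k, j ∈ B l ∨ p k j ∈ C l := by
        by_contra! h
        exact hjgood (mem_filter.2 ⟨hjA, h⟩)
      refine mem_union_right _ (mem_biUnion.2 ⟨l, mem_erase.2 ⟨hlk, mem_univ l⟩, ?_⟩)
      rcases hl with hl | hl
      · exact mem_union_left _ (mem_inter.2 ⟨hjB, hl⟩)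
      · exact mem_union_right _ (mem_filter.2 ⟨hjA, hl⟩)
    · exact mem_union_left _ (mem_sdiff.2 ⟨hjB, hjA⟩)
  have hpreimage (l : K) : #((A k).filter fun j => p k j ∈ C l) ≤ #(C k ∩ C l) :=
    card_le_card_of_injOn (p k)
      (fun j hj => mem_inter.2 ⟨hmap j (mem_filter.1 hj).1, (mem_filter.1 hj).2⟩)
      (hinj.mono fun j hj => (mem_filter.1 hj).1)
  calc #(B k \ goodPart B C p A k)
      ≤ #(B k \ A k) + ∑ l ∈ univ.erase k,
          #(B k ∩ B l ∪ (A k).filter fun j => p k j ∈ C l) :=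
        (card_le_card hcover).trans <| (card_union_le _ _).trans <|
          Nat.add_le_add_left card_biUnion_le _
    _ ≤ _ := by
        gcongr with l
        exact (card_union_le _ _).trans (Nat.add_le_add_left (hpreimage l) _)

theorem exists_perm_card_disagree_le [Fintype α] (hmap : ∀ k, ∀ j ∈ B k, p k j ∈ C k) :
    ∃ q : Equiv.Perm α, #{j | ∃ k, j ∈ B k ∧ q j ≠ p k j} ≤ ∑ k, gluingDefect B C p k := by
  choose A hAB hinj himage using fun k =>
    exists_subset_injOn_image_eq_of_surjOn (B k : Set α) ((B k).image (p k))
      (by simpa using Set.surjOn_image (p k) (B k))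
  have hAB (k : K) : A k ⊆ B k := coe_subset.1 (hAB k)
  have hAmap (k : K) : ∀ j ∈ A k, p k j ∈ C k := fun j hj => hmap k j (hAB k hj)
  obtain ⟨q, hq⟩ := exists_perm_eqOn_iUnion (pairwise_disjoint_goodPart (C := C) (p := p) hAB)
    fun k l i hi j hj => eq_of_mem_goodPart_of_apply_eq hinj hAmap hi hj
  refine ⟨q, ?_⟩
  have hbad : ({j | ∃ k, j ∈ B k ∧ q j ≠ p k j} : Finset α) ⊆
      univ.biUnion fun k => B k \ goodPart B C p A k := by
    intro j hj
    obtain ⟨k, hjB, hjq⟩ := (mem_filter.1 hj).2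
    exact mem_biUnion.2 ⟨k, mem_univ k, mem_sdiff.2 ⟨hjB, fun hjgood => hjq (hq k hjgood)⟩⟩
  calc _ ≤ ∑ k, #(B k \ goodPart B C p A k) := (card_le_card hbad).trans card_biUnion_le
    _ ≤ _ := by
      gcongr with k
      rw [gluingDefect, ← himage k, card_image_of_injOn (hinj k), ← card_sdiff_of_subset (hAB k)]
      exact card_sdiff_goodPart_le k (hinj k) (hAmap k)

theorem gluingDefect_div_le {d κ : ℝ} (k : K)
    (hBC : |(#(B k) : ℝ) / d - #(C k) / d| < κ)
    (hdisj : ∀ l ≠ k, (#(B k ∩ B l) : ℝ) / d < κ ∧ (#(C k ∩ C l) : ℝ) / d < κ)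
    (himg : (#(C k) : ℝ) / d - κ ≤ #((B k).image (p k)) / d) :
    (gluingDefect B C p k : ℝ) / d ≤ 2 * (Fintype.card K + 1) * κ := by
  have hκ : 0 ≤ κ := (abs_nonneg _).trans hBC.le
  have hpairs : ∑ l ∈ univ.erase k, ((#(B k ∩ B l) : ℝ) / d + #(C k ∩ C l) / d) ≤
      Fintype.card K * (2 * κ) :=
    calc _ ≤ ∑ l ∈ univ.erase k, 2 * κ := sum_le_sum fun l hl => by
            linarith [hdisj l (ne_of_mem_erase hl)]
      _ ≤ _ := by
        rw [sum_const, nsmul_eq_mul]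
        gcongr
        exact_mod_cast card_erase_le
  rw [gluingDefect, Nat.cast_add, Nat.cast_sub card_image_le, Nat.cast_sum]
  simp only [Nat.cast_add, add_div, sub_div, sum_div]
  linarith [(abs_lt.1 hBC).2]

end GoodPart

/-- Almost permutation extension lemma: given a finite index set `K` and `ε > 0`, there is
`κ > 0` (depending only on `|K|` and `ε`) such that any family of partial injections-up-to-κ
`p k : B k → C k` between κ-almost disjoint families of subsets of `{1,…,d}` of κ-close sizes,
with almost full images, can be glued into a genuine permutation `q` of `{1,…,d}` agreeing
with each `p k` on `B k` outside a set of proportion at most `ε`. -/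
theorem stmt13 (K : Type*) [Fintype K] (ε : ℝ) (hε : 0 < ε) :
    ∃ κ : ℝ, 0 < κ ∧
      ∀ (d : ℕ) (B C : K → Finset (Fin d)) (p : K → Fin d → Fin d),
        (∀ k : K, |((B k).card : ℝ) / d - ((C k).card : ℝ) / d| < κ) →
        (∀ k l : K, k ≠ l →
          (((B k ∩ B l).card : ℝ) / d < κ ∧ ((C k ∩ C l).card : ℝ) / d < κ)) →
        (∀ k : K, ∀ j ∈ B k, p k j ∈ C k) →
        (∀ k : K, ((C k).card : ℝ) / d - κ ≤ (((B k).image (p k)).card : ℝ) / d) →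
        ∃ q : Equiv.Perm (Fin d),
          (Nat.card {j : Fin d // ∃ k : K, j ∈ B k ∧ q j ≠ p k j} : ℝ) / d ≤ ε := by
  classical
  set n : ℝ := (Fintype.card K : ℝ) with hn
  refine ⟨ε / (2 * (n + 1) ^ 2), by positivity, fun d B C p hBC hdisj hmap himg => ?_⟩
  obtain ⟨q, hq⟩ := exists_perm_card_disagree_le hmap
  refine ⟨q, ?_⟩
  rw [Nat.card_eq_fintype_card, Fintype.card_subtype]
  calc _ ≤ (∑ k, gluingDefect B C p k : ℕ) / (d : ℝ) := by gcongr
    _ ≤ ∑ _k : K, 2 * (n + 1) * (ε / (2 * (n + 1) ^ 2)) := by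
        rw [Nat.cast_sum, sum_div]
        exact sum_le_sum fun k _ => gluingDefect_div_le k (hBC k)
          (fun l hlk => hdisj k l hlk.symm) (himg k)
    _ = n / (n + 1) * ε := by
        rw [sum_const, card_univ, nsmul_eq_mul, ← hn]
        field_simp
    _ ≤ ε := mul_le_of_le_one_left hε.le (div_le_one_of_le₀ (by linarith) (by positivity))
end

section
/- Let (X, μ) be a probability space and let α : X → A be a finite measurable observable. For δ > 0 and n ∈ ℕ, let Ξ(α, δ, n) = {φ ∈ Aⁿ : ‖φ_*(u_n) - α_*μ‖ < δ}, where ‖·‖ is the total variation norm on measures on the finite set A. Then inf_{δ>0} limsup_{n→∞} (1/n) log |Ξ(α, δ, n)| = H(α), where H(α) = -∑_{a∈A} μ(α⁻¹{a}) log μ(α⁻¹{a}) is the Shannon entropy of α. -/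
/-!
Weight `φ : Fin n → A` by `∏ j, q (φ j)`, i.e. sample its letters independently from `q`. If `φ`
lies in the typical set of `p` (empirical frequencies within `δ` of `p`), its weight is
`exp (n * ∑ a, p a * log (q a))` up to a factor `exp (± n δ ∑ a, |log (q a)|)`. As the weights sum
to `1`, the typical set has at most `exp (n (-∑ p log q + δ ∑ |log q|))` elements for every
positive `q`; smoothing `p` to a positive `q` gives the upper bound `H(p)`. For `q = p` Chebyshev's
inequality (each empirical frequency has variance at most `1 / n`) shows that the typical set
carries weight at least `1 / 2` for large `n`, so it has at least
`exp (n (-∑ p log p - δ ∑ |log p|)) / 2` elements.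
-/

open MeasureTheory Filter Finset Real

theorem log_natCast_le_log_natCast {m k : ℕ} (h : m ≤ k) : log m ≤ log k := by
  rcases Nat.eq_zero_or_pos m with rfl | hm
  · simpa using log_natCast_nonneg k
  · exact log_le_log (by exact_mod_cast hm) (by exact_mod_cast h)

theorem le_of_forall_pos_le_add_mul {x c D : ℝ} (hD : 0 ≤ D) (h : ∀ t > 0, x ≤ c + t * D) :
    x ≤ c := by
  refine le_of_forall_pos_le_add fun ε hε => (h (ε / (D + 1)) (by positivity)).trans ?_
  have : ε / (D + 1) * D ≤ ε := by
    rw [div_mul_eq_mul_div, div_le_iff₀ (by positivity)]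
    nlinarith
  linarith

section Typical

variable {A : Type*} [Fintype A]

open Classical in
noncomputable def typicalSet (p : A → ℝ) (n : ℕ) (δ : ℝ) : Finset (Fin n → A) :=
  {φ | ∑ a, |(Nat.card {j : Fin n // φ j = a} : ℝ) / n - p a| < δ}

theorem natCard_subtype_eq_card_typicalSet (p : A → ℝ) (n : ℕ) (δ : ℝ) :
    Nat.card {φ : Fin n → A // ∑ a, |(Nat.card {j : Fin n // φ j = a} : ℝ) / n - p a| < δ}
      = #(typicalSet p n δ) := by
  rw [Nat.card_eq_fintype_card, Fintype.card_subtype, typicalSet]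

theorem sum_comp_eq_sum_natCard_mul {n : ℕ} (φ : Fin n → A) (g : A → ℝ) :
    ∑ j, g (φ j) = ∑ a, (Nat.card {j : Fin n // φ j = a} : ℝ) * g a := by
  classical
  rw [← Finset.sum_fiberwise univ φ]
  refine Finset.sum_congr rfl fun a _ => ?_
  rw [Finset.sum_congr rfl fun j hj => by rw [(mem_filter.1 hj).2], sum_const,
    Nat.card_eq_fintype_card, Fintype.card_subtype, nsmul_eq_mul]

theorem natCard_eq_sum_ite [DecidableEq A] {n : ℕ} (φ : Fin n → A) (a : A) :
    (Nat.card {j : Fin n // φ j = a} : ℝ) = ∑ j, if φ j = a then 1 else 0 := by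
  simp [sum_comp_eq_sum_natCard_mul φ fun b => if b = a then (1 : ℝ) else 0]

theorem sum_prod_apply_eq_one {p : A → ℝ} (hp : ∑ a, p a = 1) (n : ℕ) :
    ∑ φ : Fin n → A, ∏ i, p (φ i) = 1 := by
  rw [← Fintype.sum_pow, hp, one_pow]

theorem sum_prod_mul_prod_apply (p : A → ℝ) {n : ℕ} (g : Fin n → A → ℝ) :
    ∑ φ : Fin n → A, (∏ i, p (φ i)) * ∏ i, g i (φ i) = ∏ i, ∑ b, p b * g i b := by
  classical
  simp_rw [Fintype.prod_sum, ← prod_mul_distrib]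

theorem sum_prod_mul_apply_mul_apply {p f : A → ℝ} (hp : ∑ a, p a = 1)
    (hf : ∑ b, p b * f b = 0) {n : ℕ} (j j' : Fin n) :
    ∑ φ : Fin n → A, (∏ i, p (φ i)) * (f (φ j) * f (φ j'))
      = if j = j' then ∑ b, p b * f b ^ 2 else 0 := by
  classical
  set g : Fin n → A → ℝ := fun i b => (if i = j then f b else 1) * (if i = j' then f b else 1)
  have hg : ∀ φ : Fin n → A, f (φ j) * f (φ j') = ∏ i, g i (φ i) := by
    intro φ
    simp only [g, prod_mul_distrib, prod_ite_eq', mem_univ, if_true]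
  simp_rw [hg, sum_prod_mul_prod_apply]
  split_ifs with h
  · subst h
    have hsum : ∀ i, ∑ b, p b * g i b = if i = j then ∑ b, p b * f b ^ 2 else 1 := by
      intro i
      by_cases hi : i = j <;> simp [g, hi, hp, sq]
    simp [hsum, prod_ite_eq']
  · exact prod_eq_zero (mem_univ j) (by simp [g, h, hf])

theorem sum_prod_mul_sq_sum_apply {p f : A → ℝ} (hp : ∑ a, p a = 1)
    (hf : ∑ b, p b * f b = 0) (n : ℕ) :
    ∑ φ : Fin n → A, (∏ i, p (φ i)) * (∑ j, f (φ j)) ^ 2 = n * ∑ b, p b * f b ^ 2 := by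
  simp_rw [sq (∑ j, _), sum_mul_sum, mul_sum]
  rw [sum_comm]
  simp_rw [sum_comm (s := univ) (t := univ) (γ := Fin n → A), sum_prod_mul_apply_mul_apply hp hf]
  simp [mul_sum]

theorem sum_prod_mul_sq_natCard_div_sub_le {p : A → ℝ} (hp0 : ∀ a, 0 ≤ p a)
    (hp : ∑ a, p a = 1) {n : ℕ} (hn : 0 < n) (a : A) :
    ∑ φ : Fin n → A, (∏ i, p (φ i)) * ((Nat.card {j : Fin n // φ j = a} : ℝ) / n - p a) ^ 2
      ≤ 1 / n := by
  classical
  have hn' : (0 : ℝ) < n := by exact_mod_cast hn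
  have hpa : p a ≤ 1 := hp ▸ single_le_sum (fun b _ => hp0 b) (mem_univ a)
  set f : A → ℝ := fun b => (if b = a then 1 else 0) - p a
  have hf : ∑ b, p b * f b = 0 := by simp [f, mul_sub, ← sum_mul, hp]
  have hf_sq : ∑ b, p b * f b ^ 2 ≤ 1 := by
    refine hp ▸ sum_le_sum fun b _ => mul_le_of_le_one_right (hp0 b) ?_
    rw [sq_le_one_iff_abs_le_one, abs_le]
    simp only [f]
    split_ifs <;> constructor <;> linarith [hp0 a]
  have hdev : ∀ φ : Fin n → A,
      (Nat.card {j : Fin n // φ j = a} : ℝ) / n - p a = (∑ j, f (φ j)) / n := by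
    intro φ
    rw [natCard_eq_sum_ite, eq_div_iff hn'.ne', sub_mul, div_mul_cancel₀ _ hn'.ne']
    simp [f, sum_sub_distrib, mul_comm]
  calc ∑ φ : Fin n → A, (∏ i, p (φ i)) * ((Nat.card {j : Fin n // φ j = a} : ℝ) / n - p a) ^ 2
      = (∑ φ : Fin n → A, (∏ i, p (φ i)) * (∑ j, f (φ j)) ^ 2) / n ^ 2 := by
        simp_rw [hdev, div_pow, mul_div_assoc', sum_div]
    _ = (∑ b, p b * f b ^ 2) / n := by
        rw [sum_prod_mul_sq_sum_apply hp hf]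
        field_simp
    _ ≤ 1 / n := by gcongr

theorem sum_prod_compl_typicalSet_le [DecidableEq A] {p : A → ℝ} (hp0 : ∀ a, 0 ≤ p a)
    (hp : ∑ a, p a = 1) {n : ℕ} (hn : 0 < n) {δ : ℝ} (hδ : 0 < δ) :
    ∑ φ ∈ (typicalSet p n δ)ᶜ, ∏ i, p (φ i) ≤ (Fintype.card A : ℝ) ^ 2 / (n * δ ^ 2) := by
  set K := (Fintype.card A : ℝ)
  set d : (Fin n → A) → A → ℝ := fun φ a => (Nat.card {j : Fin n // φ j = a} : ℝ) / n - p a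
  have hw : ∀ φ : Fin n → A, 0 ≤ ∏ i, p (φ i) := fun φ => prod_nonneg fun i _ => hp0 _
  have hfar : ∀ φ ∈ (typicalSet p n δ)ᶜ, δ ^ 2 ≤ K * ∑ a, d φ a ^ 2 := by
    intro φ hφ
    have hδφ : δ ≤ ∑ a, |d φ a| := by simpa [typicalSet, d] using hφ
    calc δ ^ 2 ≤ (∑ a, |d φ a|) ^ 2 := pow_le_pow_left₀ hδ.le hδφ 2
      _ ≤ K * ∑ a, |d φ a| ^ 2 := sq_sum_le_card_mul_sum_sq
      _ = K * ∑ a, d φ a ^ 2 := by simp_rw [sq_abs]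
  have hmoment : δ ^ 2 * ∑ φ ∈ (typicalSet p n δ)ᶜ, ∏ i, p (φ i) ≤ K ^ 2 / n :=
    calc δ ^ 2 * ∑ φ ∈ (typicalSet p n δ)ᶜ, ∏ i, p (φ i)
        ≤ ∑ φ ∈ (typicalSet p n δ)ᶜ, (∏ i, p (φ i)) * (K * ∑ a, d φ a ^ 2) := by
          rw [mul_sum]
          exact sum_le_sum fun φ hφ => by
            rw [mul_comm]; exact mul_le_mul_of_nonneg_left (hfar φ hφ) (hw φ)
      _ ≤ ∑ φ, (∏ i, p (φ i)) * (K * ∑ a, d φ a ^ 2) :=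
          sum_le_sum_of_subset_of_nonneg (subset_univ _) fun φ _ _ =>
            mul_nonneg (hw φ) (mul_nonneg (Nat.cast_nonneg _) (sum_nonneg fun _ _ => sq_nonneg _))
      _ = K * ∑ a, ∑ φ, (∏ i, p (φ i)) * d φ a ^ 2 := by
          rw [sum_comm, mul_sum]
          simp_rw [mul_sum]
          exact sum_congr rfl fun _ _ => sum_congr rfl fun _ _ => by ring
      _ ≤ K * ∑ _a : A, 1 / (n : ℝ) :=
          mul_le_mul_of_nonneg_left
            (sum_le_sum fun a _ => sum_prod_mul_sq_natCard_div_sub_le hp0 hp hn a)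
            (Nat.cast_nonneg _)
      _ = K ^ 2 / n := by simp [K]; ring
  rw [div_mul_eq_div_div, le_div_iff₀ (by positivity)]
  linarith

theorem abs_sum_natCard_mul_sub_le {p : A → ℝ} {n : ℕ} (hn : 0 < n) {δ : ℝ} {φ : Fin n → A}
    (hφ : φ ∈ typicalSet p n δ) (g : A → ℝ) :
    |∑ a, (Nat.card {j : Fin n // φ j = a} : ℝ) * g a - n * ∑ a, p a * g a|
      ≤ n * δ * ∑ a, |g a| := by
  have hn' : (0 : ℝ) < n := by exact_mod_cast hn
  set d : A → ℝ := fun a => (Nat.card {j : Fin n // φ j = a} : ℝ) / n - p a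
  have hφ' : ∑ a, |d a| < δ := by simpa [typicalSet, d] using hφ
  have hd : ∀ a, |d a| ≤ δ := fun a =>
    (single_le_sum (f := fun b => |d b|) (fun b _ => abs_nonneg _) (mem_univ a)).trans hφ'.le
  calc |∑ a, (Nat.card {j : Fin n // φ j = a} : ℝ) * g a - n * ∑ a, p a * g a|
      = n * |∑ a, d a * g a| := by
        rw [← abs_of_pos hn', ← abs_mul, abs_of_pos hn', mul_sum, mul_sum, ← sum_sub_distrib]
        congr 1
        refine sum_congr rfl fun a _ => ?_
        simp only [d]
        field_simp
    _ ≤ n * ∑ a, δ * |g a| := by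
        gcongr
        refine (abs_sum_le_sum_abs _ _).trans (sum_le_sum fun a _ => ?_)
        rw [abs_mul]
        exact mul_le_mul_of_nonneg_right (hd a) (abs_nonneg _)
    _ = n * δ * ∑ a, |g a| := by rw [← mul_sum, mul_assoc]

theorem prod_apply_eq_exp_sum_natCard_mul_log {q : A → ℝ} {n : ℕ} {φ : Fin n → A}
    (hq : ∀ j, 0 < q (φ j)) :
    ∏ j, q (φ j) = exp (∑ a, (Nat.card {j : Fin n // φ j = a} : ℝ) * log (q a)) := by
  rw [← sum_comp_eq_sum_natCard_mul φ fun a => log (q a), exp_sum]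
  exact prod_congr rfl fun j _ => (exp_log (hq j)).symm

theorem exp_le_prod_apply_of_mem_typicalSet {p q : A → ℝ} (hq : ∀ a, 0 < q a) {n : ℕ}
    (hn : 0 < n) {δ : ℝ} {φ : Fin n → A} (hφ : φ ∈ typicalSet p n δ) :
    exp (n * (∑ a, p a * log (q a) - δ * ∑ a, |log (q a)|)) ≤ ∏ j, q (φ j) := by
  rw [prod_apply_eq_exp_sum_natCard_mul_log fun j => hq (φ j), exp_le_exp]
  have := (abs_le.1 (abs_sum_natCard_mul_sub_le hn hφ fun a => log (q a))).1
  linarith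

theorem prod_apply_le_exp_of_mem_typicalSet {p q : A → ℝ} (hq : ∀ a, 0 ≤ q a) {n : ℕ}
    (hn : 0 < n) {δ : ℝ} {φ : Fin n → A} (hφ : φ ∈ typicalSet p n δ) :
    ∏ j, q (φ j) ≤ exp (n * (∑ a, p a * log (q a) + δ * ∑ a, |log (q a)|)) := by
  by_cases hpos : ∀ j, 0 < q (φ j)
  · rw [prod_apply_eq_exp_sum_natCard_mul_log hpos, exp_le_exp]
    have := (abs_le.1 (abs_sum_natCard_mul_sub_le hn hφ fun a => log (q a))).2
    linarith
  · obtain ⟨j, hj⟩ := not_forall.1 hpos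
    rw [prod_eq_zero (mem_univ j) (le_antisymm (not_lt.1 hj) (hq _))]
    exact (exp_pos _).le

theorem card_typicalSet_le {p q : A → ℝ} (hq : ∀ a, 0 < q a) (hq1 : ∑ a, q a = 1) {n : ℕ}
    (hn : 0 < n) (δ : ℝ) :
    (#(typicalSet p n δ) : ℝ) ≤ exp (n * (-∑ a, p a * log (q a) + δ * ∑ a, |log (q a)|)) := by
  set X := n * (∑ a, p a * log (q a) - δ * ∑ a, |log (q a)|)
  have hmass : #(typicalSet p n δ) * exp X ≤ 1 :=
    calc #(typicalSet p n δ) * exp X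
        ≤ ∑ φ ∈ typicalSet p n δ, ∏ j, q (φ j) := by
          rw [← nsmul_eq_mul]
          exact card_nsmul_le_sum _ _ _ fun φ hφ => exp_le_prod_apply_of_mem_typicalSet hq hn hφ
      _ ≤ ∑ φ : Fin n → A, ∏ j, q (φ j) :=
          sum_le_sum_of_subset_of_nonneg (subset_univ _) fun φ _ _ =>
            prod_nonneg fun j _ => (hq _).le
      _ = 1 := sum_prod_apply_eq_one hq1 n
  calc (#(typicalSet p n δ) : ℝ) ≤ exp (-X) := by
        rw [exp_neg, ← one_div, le_div_iff₀ (exp_pos X)]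
        exact hmass
    _ = _ := by congr 1; ring

theorem half_le_card_typicalSet_mul_exp {p : A → ℝ} (hp0 : ∀ a, 0 ≤ p a) (hp : ∑ a, p a = 1)
    {n : ℕ} (hn : 0 < n) {δ : ℝ} (hδ : 0 < δ) (hlarge : 2 * Fintype.card A ^ 2 ≤ n * δ ^ 2) :
    1 / 2 ≤ #(typicalSet p n δ) * exp (n * (∑ a, p a * log (p a) + δ * ∑ a, |log (p a)|)) := by
  classical
  have hfar : ∑ φ ∈ (typicalSet p n δ)ᶜ, ∏ i, p (φ i) ≤ 1 / 2 := by
    refine (sum_prod_compl_typicalSet_le hp0 hp hn hδ).trans ?_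
    rw [div_le_div_iff₀ (by positivity) two_pos]
    linarith
  have hnear : ∑ φ ∈ typicalSet p n δ, ∏ i, p (φ i)
      ≤ #(typicalSet p n δ) * exp (n * (∑ a, p a * log (p a) + δ * ∑ a, |log (p a)|)) := by
    rw [← nsmul_eq_mul]
    exact sum_le_card_nsmul _ _ _ fun φ hφ => prod_apply_le_exp_of_mem_typicalSet hp0 hn hφ
  have htotal := sum_add_sum_compl (typicalSet p n δ) fun φ => ∏ i, p (φ i)
  rw [sum_prod_apply_eq_one hp] at htotal
  linarith

theorem typicalSet_mono (p : A → ℝ) (n : ℕ) {δ δ' : ℝ} (h : δ ≤ δ') :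
    typicalSet p n δ ⊆ typicalSet p n δ' := by
  intro φ hφ
  simp only [typicalSet, mem_filter, mem_univ, true_and] at hφ ⊢
  exact hφ.trans_le h

noncomputable def typicalGrowth (p : A → ℝ) (δ : ℝ) : ℝ :=
  limsup (fun n : ℕ => 1 / (n : ℝ) * log #(typicalSet p n δ)) atTop

theorem one_div_mul_log_card_typicalSet_nonneg (p : A → ℝ) (n : ℕ) (δ : ℝ) :
    0 ≤ 1 / (n : ℝ) * log #(typicalSet p n δ) :=
  mul_nonneg (by positivity) (log_natCast_nonneg _)

theorem one_div_mul_log_card_typicalSet_le (p : A → ℝ) (n : ℕ) (δ : ℝ) :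
    1 / (n : ℝ) * log #(typicalSet p n δ) ≤ log (Fintype.card A) := by
  rcases Nat.eq_zero_or_pos n with rfl | hn
  · simpa using log_natCast_nonneg _
  have hcard : #(typicalSet p n δ) ≤ Fintype.card A ^ n :=
    (card_le_univ _).trans_eq (by simp)
  rw [one_div_mul_eq_div, div_le_iff₀' (by positivity), ← log_pow]
  exact_mod_cast log_natCast_le_log_natCast hcard

theorem isBoundedUnder_log_card_typicalSet (p : A → ℝ) (δ : ℝ) :
    IsBoundedUnder (· ≤ ·) atTop fun n : ℕ => 1 / (n : ℝ) * log #(typicalSet p n δ) :=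
  isBoundedUnder_of ⟨_, fun n => one_div_mul_log_card_typicalSet_le p n δ⟩

theorem isCoboundedUnder_log_card_typicalSet (p : A → ℝ) (δ : ℝ) :
    IsCoboundedUnder (· ≤ ·) atTop fun n : ℕ => 1 / (n : ℝ) * log #(typicalSet p n δ) :=
  isCoboundedUnder_le_of_le atTop fun n => one_div_mul_log_card_typicalSet_nonneg p n δ

theorem typicalGrowth_nonneg (p : A → ℝ) (δ : ℝ) : 0 ≤ typicalGrowth p δ :=
  le_limsup_of_frequently_le
    (Frequently.of_forall fun n => one_div_mul_log_card_typicalSet_nonneg p n δ)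
    (isBoundedUnder_log_card_typicalSet p δ)

theorem typicalGrowth_mono (p : A → ℝ) : Monotone (typicalGrowth p) := fun δ δ' h =>
  limsup_le_limsup
    (Eventually.of_forall fun n => mul_le_mul_of_nonneg_left
      (log_natCast_le_log_natCast (card_le_card (typicalSet_mono p n h))) (by positivity))
    (isCoboundedUnder_log_card_typicalSet p δ) (isBoundedUnder_log_card_typicalSet p δ')

theorem typicalGrowth_le {p q : A → ℝ} (hp0 : ∀ a, 0 ≤ p a) (hq : ∀ a, 0 < q a)
    (hq1 : ∑ a, q a = 1) {δ : ℝ} (hδ : 0 ≤ δ) :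
    typicalGrowth p δ ≤ -∑ a, p a * log (q a) + δ * ∑ a, |log (q a)| := by
  have hcross : ∑ a, p a * log (q a) ≤ 0 := sum_nonpos fun a _ =>
    mul_nonpos_of_nonneg_of_nonpos (hp0 a)
      (log_nonpos (hq a).le (hq1 ▸ single_le_sum (fun b _ => (hq b).le) (mem_univ a)))
  have hc : 0 ≤ -∑ a, p a * log (q a) + δ * ∑ a, |log (q a)| :=
    add_nonneg (neg_nonneg.2 hcross) (mul_nonneg hδ (sum_nonneg fun _ _ => abs_nonneg _))
  refine limsup_le_of_le (isCoboundedUnder_log_card_typicalSet p δ)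
    ((eventually_gt_atTop 0).mono fun n hn => ?_)
  rw [one_div_mul_eq_div, div_le_iff₀' (by exact_mod_cast hn)]
  rcases Nat.eq_zero_or_pos #(typicalSet p n δ) with h | h
  · rw [h, Nat.cast_zero, log_zero]
    positivity
  · rw [log_le_iff_le_exp (by exact_mod_cast h)]
    exact card_typicalSet_le hq hq1 hn δ

theorem le_typicalGrowth {p : A → ℝ} (hp0 : ∀ a, 0 ≤ p a) (hp : ∑ a, p a = 1) {δ : ℝ}
    (hδ : 0 < δ) :
    -∑ a, p a * log (p a) - δ * ∑ a, |log (p a)| ≤ typicalGrowth p δ := by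
  set M := ∑ a, p a * log (p a) + δ * ∑ a, |log (p a)|
  refine le_of_forall_pos_le_add fun ε hε => ?_
  have hlarge : ∀ᶠ n : ℕ in atTop,
      0 < n ∧ 2 * (Fintype.card A : ℝ) ^ 2 ≤ n * δ ^ 2 ∧ log 2 ≤ n * ε := by
    have hδ2 : 0 < δ ^ 2 := by positivity
    filter_upwards [eventually_gt_atTop 0,
      tendsto_natCast_atTop_atTop.eventually_ge_atTop (2 * (Fintype.card A : ℝ) ^ 2 / δ ^ 2),
      tendsto_natCast_atTop_atTop.eventually_ge_atTop (log 2 / ε)] with n hn h1 h2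
    exact ⟨hn, (div_le_iff₀ hδ2).1 h1, (div_le_iff₀ hε).1 h2⟩
  rw [← sub_le_iff_le_add]
  refine le_limsup_of_frequently_le (hlarge.mono fun n ⟨hn, hcheb, hlog2⟩ => ?_).frequently
    (isBoundedUnder_log_card_typicalSet p δ)
  have hhalf : 1 / 2 ≤ #(typicalSet p n δ) * exp (n * M) :=
    half_le_card_typicalSet_mul_exp hp0 hp hn hδ hcheb
  have hcard : (0 : ℝ) < #(typicalSet p n δ) := by
    by_contra h0
    rw [le_antisymm (not_lt.1 h0) (Nat.cast_nonneg _), zero_mul] at hhalf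
    norm_num at hhalf
  have hlog : -log 2 - n * M ≤ log #(typicalSet p n δ) := by
    have := log_le_log (by norm_num) hhalf
    rw [log_mul hcard.ne' (exp_pos _).ne', log_exp, one_div, log_inv] at this
    linarith
  rw [one_div_mul_eq_div, le_div_iff₀ (by exact_mod_cast hn)]
  linarith

theorem exists_neg_sum_mul_log_le {p : A → ℝ} (hp0 : ∀ a, 0 ≤ p a) (hp : ∑ a, p a = 1)
    {ε : ℝ} (hε : 0 < ε) :
    ∃ q : A → ℝ, (∀ a, 0 < q a) ∧ ∑ a, q a = 1 ∧
      -∑ a, p a * log (q a) ≤ -∑ a, p a * log (p a) + ε * Fintype.card A := by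
  set K := (Fintype.card A : ℝ)
  have hZ : 0 < 1 + K * ε := by positivity
  refine ⟨fun a => (p a + ε) / (1 + K * ε), fun a => div_pos (by linarith [hp0 a]) hZ, ?_, ?_⟩
  · rw [← sum_div, sum_add_distrib, hp, sum_const, card_univ, nsmul_eq_mul, div_self hZ.ne']
  · have hlogZ : log (1 + K * ε) ≤ K * ε := by linarith [log_le_sub_one_of_pos hZ]
    have hterm : ∀ a, p a * log (p a) ≤ p a * log (p a + ε) := fun a => by
      rcases (hp0 a).eq_or_lt with h | h
      · simp [← h]
      · exact mul_le_mul_of_nonneg_left (log_le_log h (by linarith)) h.le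
    have hlogq : ∑ a, p a * log ((p a + ε) / (1 + K * ε))
        = ∑ a, p a * log (p a + ε) - log (1 + K * ε) := by
      have hpε : ∀ a, p a + ε ≠ 0 := fun a => by linarith [hp0 a]
      simp_rw [log_div (hpε _) hZ.ne', mul_sub, sum_sub_distrib, ← sum_mul, hp, one_mul]
    rw [hlogq]
    linarith [sum_le_sum fun a (_ : a ∈ univ) => hterm a]

theorem iInf_typicalGrowth_eq {p : A → ℝ} (hp0 : ∀ a, 0 ≤ p a) (hp : ∑ a, p a = 1) :
    ⨅ δ : {δ : ℝ // 0 < δ}, typicalGrowth p δ = -∑ a, p a * log (p a) := by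
  have hbdd : BddBelow (Set.range fun δ : {δ : ℝ // 0 < δ} => typicalGrowth p δ) :=
    ⟨0, Set.forall_mem_range.2 fun δ => typicalGrowth_nonneg p δ⟩
  apply le_antisymm
  · refine le_of_forall_pos_le_add_mul (Nat.cast_nonneg (Fintype.card A)) fun ε hε => ?_
    obtain ⟨q, hq, hq1, hcross⟩ := exists_neg_sum_mul_log_le hp0 hp hε
    refine le_trans ?_ hcross
    refine le_of_forall_pos_le_add_mul (D := ∑ a, |log (q a)|)
      (sum_nonneg fun a _ => abs_nonneg _) fun δ hδ => ?_
    exact (ciInf_le hbdd ⟨δ, hδ⟩).trans (typicalGrowth_le hp0 hq hq1 hδ.le)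
  · refine le_ciInf fun ⟨δ, hδ⟩ => le_of_forall_pos_le_add_mul (D := ∑ a, |log (p a)|)
      (sum_nonneg fun a _ => abs_nonneg _) fun t ht => ?_
    have hlow := le_typicalGrowth hp0 hp (lt_min hδ ht)
    have hmono := typicalGrowth_mono p (min_le_left δ t)
    have hmin : min δ t * ∑ a, |log (p a)| ≤ t * ∑ a, |log (p a)| :=
      mul_le_mul_of_nonneg_right (min_le_right δ t) (sum_nonneg fun a _ => abs_nonneg _)
    linarith

end Typical

/-- The exponential growth rate of the number of `δ`-good empirical approximations of a
finite observable `α`, infimized over `δ > 0`, equals the Shannon entropy `H(α)`. -/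
theorem stmt16 {X A : Type*} [MeasurableSpace X] (μ : Measure X) [IsProbabilityMeasure μ]
    [Fintype A] [MeasurableSpace A] [MeasurableSingletonClass A]
    (α : X → A) (hα : Measurable α) :
    (⨅ δ : {δ : ℝ // 0 < δ},
      limsup (fun n : ℕ => (1 / (n : ℝ)) * Real.log
        (Nat.card {φ : Fin n → A //
          ∑ a : A, |(Nat.card {j : Fin n // φ j = a} : ℝ) / n - (μ (α ⁻¹' {a})).toReal|
            < (δ : ℝ)})) atTop)
    = -∑ a : A, (μ (α ⁻¹' {a})).toReal * Real.log (μ (α ⁻¹' {a})).toReal := by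
  have hsum : ∑ a, μ.real (α ⁻¹' {a}) = 1 := by
    rw [sum_measureReal_preimage_singleton univ fun a _ => hα (measurableSet_singleton a),
      coe_univ, Set.preimage_univ, probReal_univ]
  simp only [natCard_subtype_eq_card_typicalSet]
  exact iInf_typicalGrowth_eq (fun a => measureReal_nonneg) hsum
end

section
/- Let X be a compact metrizable space, G a countable group acting on X by homeomorphisms, and let ρ be a continuous pseudometric on X. Fix d ∈ ℕ, a map σ : G → S_d, g ∈ G, and ε > 0. If p ∈ S_d satisfies u_d({j : p(σ(g)(j)) ≠ σ(g)(p(j))}) ≤ ε, then for any φ ∈ X^d, ρ₂(g·(φ∘p), (φ∘p)∘σ(g)) ≤ ρ₂(g·φ, φ∘σ(g)) + 2·√ε·diam(X, ρ), where (g·φ)(j) = g·(φ(j)) and ρ₂(x,y)² = (1/d)∑_j ρ(x(j), y(j))². -/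
/-- Precomposing a microstate with a permutation `p` almost commuting with `σ(g)` changes the
equivariance defect `ρ₂(g·φ, φ∘σ(g))` by at most `2√ε · diam(X,ρ)`. Here `ρ` is a continuous
pseudometric on the compact space `X`, `s = σ(g)`, and
`ρ₂(x,y) = ((1/d) ∑_j ρ(x j, y j)²)^{1/2}`. -/
theorem stmt17 {X : Type*} [TopologicalSpace X] [CompactSpace X]
    {G : Type*} [Group G] [MulAction G X]
    (ρ : X → X → ℝ)
    (hcont : Continuous fun q : X × X => ρ q.1 q.2)
    (hnonneg : ∀ x y, 0 ≤ ρ x y) (hrefl : ∀ x, ρ x x = 0)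
    (hsymm : ∀ x y, ρ x y = ρ y x)
    (htri : ∀ x y z, ρ x z ≤ ρ x y + ρ y z)
    (d : ℕ) (g : G) (s p : Equiv.Perm (Fin d))
    (ε : ℝ) (hε : 0 < ε)
    (hp : (Nat.card {j : Fin d // p (s j) ≠ s (p j)} : ℝ) / d ≤ ε)
    (ρ₂ : (Fin d → X) → (Fin d → X) → ℝ)
    (hρ₂ : ∀ x y : Fin d → X,
      ρ₂ x y = Real.sqrt ((1 / (d : ℝ)) * ∑ j : Fin d, ρ (x j) (y j) ^ 2))
    (diam : ℝ) (hdiam : diam = sSup (Set.range fun q : X × X => ρ q.1 q.2)) :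
    ∀ φ : Fin d → X,
      ρ₂ (fun j => g • φ (p j)) (fun j => φ (p (s j)))
        ≤ ρ₂ (fun j => g • φ j) (fun j => φ (s j)) + 2 * Real.sqrt ε * diam := by
  intro φ
  classical
  have hbdd : BddAbove (Set.range fun q : X × X => ρ q.1 q.2) := by
    rcases isEmpty_or_nonempty X with h | h
    · simp [Set.range_eq_empty]
    · exact (isCompact_range hcont).bddAbove
  have hρle : ∀ x y, ρ x y ≤ diam := by
    intro x y; rw [hdiam]; exact le_csSup hbdd ⟨(x, y), rfl⟩
  have hdiam0 : (0 : ℝ) ≤ diam := by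
    rcases isEmpty_or_nonempty X with h | h
    · rw [hdiam]; simp [Set.range_eq_empty, Real.sSup_empty]
    · obtain ⟨x⟩ := h
      calc (0:ℝ) = ρ x x := (hrefl x).symm
        _ ≤ diam := hρle x x
  set a : EuclideanSpace ℝ (Fin d) := WithLp.toLp 2 fun j => ρ (g • φ (p j)) (φ (s (p j))) with ha
  set b : EuclideanSpace ℝ (Fin d) := WithLp.toLp 2 fun j => ρ (φ (s (p j))) (φ (p (s j))) with hb
  have hnorm : ∀ x : EuclideanSpace ℝ (Fin d), ‖x‖ = Real.sqrt (∑ j, x j ^ 2) := by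
    intro x
    rw [EuclideanSpace.norm_eq]
    congr 1
    exact Finset.sum_congr rfl fun j _ => by rw [Real.norm_eq_abs, sq_abs]
  have hd0 : (0:ℝ) ≤ 1 / (d:ℝ) := by positivity
  have hsqrt_mul : ∀ c : EuclideanSpace ℝ (Fin d),
      Real.sqrt ((1 / (d:ℝ)) * ∑ j, c j ^ 2) = Real.sqrt (1 / (d:ℝ)) * ‖c‖ := by
    intro c; rw [Real.sqrt_mul hd0, hnorm]
  -- triangle inequality step
  have step1 : ρ₂ (fun j => g • φ (p j)) (fun j => φ (p (s j))) ≤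
      Real.sqrt ((1 / (d:ℝ)) * ∑ j, a j ^ 2) + Real.sqrt ((1 / (d:ℝ)) * ∑ j, b j ^ 2) := by
    rw [hρ₂, hsqrt_mul a, hsqrt_mul b, ← mul_add]
    have h1 : ∑ j : Fin d, ρ (g • φ (p j)) (φ (p (s j))) ^ 2 ≤ ∑ j, ((a + b) j) ^ 2 := by
      apply Finset.sum_le_sum
      intro j _
      have h2 : ρ (g • φ (p j)) (φ (p (s j))) ≤ a j + b j := htri _ _ _
      have h3 : (a + b) j = a j + b j := rfl
      rw [h3]
      exact pow_le_pow_left₀ (hnonneg _ _) h2 2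
    calc Real.sqrt ((1 / (d:ℝ)) * ∑ j : Fin d, ρ (g • φ (p j)) (φ (p (s j))) ^ 2)
        ≤ Real.sqrt ((1 / (d:ℝ)) * ∑ j, ((a + b) j) ^ 2) := by
          apply Real.sqrt_le_sqrt
          exact mul_le_mul_of_nonneg_left h1 hd0
      _ = Real.sqrt (1 / (d:ℝ)) * ‖a + b‖ := hsqrt_mul (a + b)
      _ ≤ Real.sqrt (1 / (d:ℝ)) * (‖a‖ + ‖b‖) := by
          exact mul_le_mul_of_nonneg_left (norm_add_le a b) (Real.sqrt_nonneg _)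
  -- first term equals ρ₂ of the original defect
  have step2 : Real.sqrt ((1 / (d:ℝ)) * ∑ j, a j ^ 2)
      = ρ₂ (fun j => g • φ j) (fun j => φ (s j)) := by
    rw [hρ₂]
    congr 2
    exact Equiv.sum_comp p (fun k => ρ (g • φ k) (φ (s k)) ^ 2)
  -- second term bound
  have step3 : Real.sqrt ((1 / (d:ℝ)) * ∑ j, b j ^ 2) ≤ Real.sqrt ε * diam := by
    have hcard : (Nat.card {j : Fin d // p (s j) ≠ s (p j)} : ℕ)
        = (Finset.univ.filter fun j : Fin d => p (s j) ≠ s (p j)).card := by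
      rw [Nat.card_eq_fintype_card, Fintype.card_subtype]
    have hsum : ∑ j, b j ^ 2
        ≤ (Nat.card {j : Fin d // p (s j) ≠ s (p j)} : ℝ) * diam ^ 2 := by
      rw [hcard]
      calc ∑ j, b j ^ 2
          ≤ ∑ j : Fin d, (if p (s j) ≠ s (p j) then diam ^ 2 else 0) := by
            apply Finset.sum_le_sum
            intro j _
            by_cases h : p (s j) ≠ s (p j)
            · rw [if_pos h]
              exact pow_le_pow_left₀ (hnonneg _ _) (hρle _ _) 2
            · rw [if_neg h]
              push_neg at h
              have : b j = 0 := by rw [hb]; simp only; rw [h, hrefl]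
              rw [this]; norm_num
        _ = ((Finset.univ.filter fun j : Fin d => p (s j) ≠ s (p j)).card : ℝ) * diam ^ 2 := by
            rw [Finset.sum_ite, Finset.sum_const, Finset.sum_const, nsmul_eq_mul]
            simp [mul_comm]
    have hle : (1 / (d:ℝ)) * ∑ j, b j ^ 2 ≤ ε * diam ^ 2 := by
      calc (1 / (d:ℝ)) * ∑ j, b j ^ 2
          ≤ (1 / (d:ℝ)) * ((Nat.card {j : Fin d // p (s j) ≠ s (p j)} : ℝ) * diam ^ 2) :=
            mul_le_mul_of_nonneg_left hsum hd0
        _ = ((Nat.card {j : Fin d // p (s j) ≠ s (p j)} : ℝ) / d) * diam ^ 2 := by ring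
        _ ≤ ε * diam ^ 2 := mul_le_mul_of_nonneg_right hp (sq_nonneg _)
    calc Real.sqrt ((1 / (d:ℝ)) * ∑ j, b j ^ 2) ≤ Real.sqrt (ε * diam ^ 2) :=
          Real.sqrt_le_sqrt hle
      _ = Real.sqrt ε * diam := by
          rw [Real.sqrt_mul hε.le, Real.sqrt_sq hdiam0]
  have hfin : Real.sqrt ε * diam ≤ 2 * Real.sqrt ε * diam := by
    nlinarith [Real.sqrt_nonneg ε, mul_nonneg (Real.sqrt_nonneg ε) hdiam0]
  calc ρ₂ (fun j => g • φ (p j)) (fun j => φ (p (s j)))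
      ≤ Real.sqrt ((1 / (d:ℝ)) * ∑ j, a j ^ 2) + Real.sqrt ((1 / (d:ℝ)) * ∑ j, b j ^ 2) := step1
    _ ≤ ρ₂ (fun j => g • φ j) (fun j => φ (s j)) + Real.sqrt ε * diam := by
        rw [step2]; exact add_le_add_right step3 _
    _ ≤ _ := add_le_add_right hfin _
end
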